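/- arXiv:2003.12955 — 9 statements merged into one kernel-verified Lean document; each statement's English description precedes it below -/
import Mathlib

section
/- A 3×3 real matrix of the form x·P₄ + y·P₅ + z·P₆, where P₄, P₅, P₆ are the three transposition permutation matrices, is orthogonal if and only if x² + y² + z² = 1 and x + y + z ∈ {1, -1}. -/
open Matrix

noncomputable def P4 : Matrix (Fin 3) (Fin 3) ℝ := !![1,0,0; 0,0,1; 0,1,0]
noncomputable def P5 : Matrix (Fin 3) (Fin 3) ℝ := !![0,1,0; 1,0,0; 0,0,1]
noncomputable def P6 : Matrix (Fin 3) (Fin 3) ℝ := !![0,0,1; 0,1,0; 1,0,0]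

theorem stmt_1 (x y z : ℝ) :
    (x • P4 + y • P5 + z • P6)ᵀ * (x • P4 + y • P5 + z • P6) = 1 ↔
    x ^ 2 + y ^ 2 + z ^ 2 = 1 ∧ (x + y + z = 1 ∨ x + y + z = -1) := by
  have hM : x • P4 + y • P5 + z • P6 = !![x,y,z; y,z,x; z,x,y] := by
    ext i j
    fin_cases i <;> fin_cases j <;> simp [P4, P5, P6, Matrix.vecHead, Matrix.vecTail]
  have hT : (!![x,y,z; y,z,x; z,x,y])ᵀ = !![x,y,z; y,z,x; z,x,y] := by
    ext i j
    fin_cases i <;> fin_cases j <;> simp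
  rw [hM, hT, Matrix.mul_fin_three,
    show (1 : Matrix (Fin 3) (Fin 3) ℝ) = !![1,0,0; 0,1,0; 0,0,1] from by
      simp [Matrix.one_fin_three]]
  constructor
  · intro h
    have h00 := congrFun (congrFun h 0) 0
    have h01 := congrFun (congrFun h 0) 1
    simp at h00 h01
    have h1 : x ^ 2 + y ^ 2 + z ^ 2 = 1 := by nlinarith
    refine ⟨h1, ?_⟩
    have h3 : (x + y + z - 1) * (x + y + z + 1) = 0 := by nlinarith
    rcases mul_eq_zero.mp h3 with h | h
    · left; linarith
    · right; linarith
  · rintro ⟨h1, h2⟩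
    have h4 : x * y + y * z + z * x = 0 := by
      rcases h2 with h | h <;> nlinarith
    ext i j
    fin_cases i <;> fin_cases j <;> simp [Matrix.vecHead, Matrix.vecTail] <;> nlinarith
end

section
/- For real numbers x, y satisfying x² + y² + x + y + xy = 0, one has −1 ≤ x ≤ 1/3. -/
theorem stmt_4 (x y : ℝ) (h : x ^ 2 + y ^ 2 + x + y + x * y = 0) :
    -1 ≤ x ∧ x ≤ 1/3 := by
  constructor <;> nlinarith [sq_nonneg (2*y + x + 1), sq_nonneg (x+1), sq_nonneg (3*x-1)]
end

section
/- The set 𝒳 of 3×3 real matrices of the form x·I + y·P₂ + (1−x−y)·P₃ with x² + y² − x − y + xy = 0 (where P₂, P₃ are the 3-cycle permutation matrices) is closed under matrix multiplication: the product of two such matrices is again of this form. -/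
open Matrix

noncomputable def P2 : Matrix (Fin 3) (Fin 3) ℝ := !![0,1,0; 0,0,1; 1,0,0]
noncomputable def P3 : Matrix (Fin 3) (Fin 3) ℝ := !![0,0,1; 1,0,0; 0,1,0]

theorem stmt_5 (x₁ y₁ x₂ y₂ : ℝ)
    (h₁ : x₁ ^ 2 + y₁ ^ 2 - x₁ - y₁ + x₁ * y₁ = 0)
    (h₂ : x₂ ^ 2 + y₂ ^ 2 - x₂ - y₂ + x₂ * y₂ = 0) :
    ∃ x₃ y₃ : ℝ, x₃ ^ 2 + y₃ ^ 2 - x₃ - y₃ + x₃ * y₃ = 0 ∧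
      (x₁ • (1 : Matrix (Fin 3) (Fin 3) ℝ) + y₁ • P2 + (1 - x₁ - y₁) • P3) *
        (x₂ • (1 : Matrix (Fin 3) (Fin 3) ℝ) + y₂ • P2 + (1 - x₂ - y₂) • P3) =
      x₃ • (1 : Matrix (Fin 3) (Fin 3) ℝ) + y₃ • P2 + (1 - x₃ - y₃) • P3 := by
  refine ⟨x₁ * x₂ + y₁ * (1 - x₂ - y₂) + (1 - x₁ - y₁) * y₂,
    x₁ * y₂ + y₁ * x₂ + (1 - x₁ - y₁) * (1 - x₂ - y₂), ?_, ?_⟩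
  · nlinarith [sq_nonneg (x₁ - x₂), sq_nonneg (y₁ - y₂), sq_nonneg (x₁ + y₁ - x₂ - y₂)]
  · ext i j
    fin_cases i <;> fin_cases j <;>
      simp [P2, P3, Matrix.mul_apply, Fin.sum_univ_succ, Matrix.one_apply, Matrix.vecHead, Matrix.vecTail] <;> ring
end

section
/- The set 𝒳 of 3×3 real matrices x·I + y·P₂ + z·P₃ with x + y + z = 1 and x² + y² + z² = 1 forms a group under matrix multiplication, with identity I and inverse given by the transpose. -/
open Matrix

noncomputable def XSet : Set (Matrix (Fin 3) (Fin 3) ℝ) :=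
  { M | ∃ x y z : ℝ, x + y + z = 1 ∧ x ^ 2 + y ^ 2 + z ^ 2 = 1 ∧
        M = x • (1 : Matrix (Fin 3) (Fin 3) ℝ) + y • P2 + z • P3 }

lemma circ (x y z : ℝ) :
    x • (1 : Matrix (Fin 3) (Fin 3) ℝ) + y • P2 + z • P3 =
      !![x,y,z; z,x,y; y,z,x] := by
  ext i j
  fin_cases i <;> fin_cases j <;>
    simp [P2, P3, Matrix.one_apply, Matrix.vecHead, Matrix.vecTail]

theorem stmt_6 :
    (1 : Matrix (Fin 3) (Fin 3) ℝ) ∈ XSet ∧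
    (∀ A B, A ∈ XSet → B ∈ XSet → A * B ∈ XSet) ∧
    (∀ A, A ∈ XSet → Aᵀ ∈ XSet ∧ A * Aᵀ = 1 ∧ Aᵀ * A = 1) := by
  refine ⟨⟨1, 0, 0, by norm_num, by norm_num, by simp⟩, ?_, ?_⟩
  · rintro A B ⟨x, y, z, h1, h2, rfl⟩ ⟨u, v, w, h1', h2', rfl⟩
    refine ⟨x*u + y*w + z*v, x*v + y*u + z*w, x*w + y*v + z*u, by nlinarith, ?_, ?_⟩
    · have hp : x*y + y*z + z*x = 0 := by nlinarith
      have hq : u*v + v*w + w*u = 0 := by nlinarith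
      linear_combination (u^2+v^2+w^2)*h2 + h2' + (2*(u*v+v*w+w*u))*hp
    rw [circ, circ, circ]
    ext i j
    fin_cases i <;> fin_cases j <;>
      simp [Matrix.mul_apply, Fin.sum_univ_three] <;> ring
  · rintro A ⟨x, y, z, h1, h2, rfl⟩
    have hT : (x • (1 : Matrix (Fin 3) (Fin 3) ℝ) + y • P2 + z • P3)ᵀ =
        x • (1 : Matrix (Fin 3) (Fin 3) ℝ) + z • P2 + y • P3 := by
      rw [circ, circ]
      ext i j
      fin_cases i <;> fin_cases j <;> simp
    refine ⟨⟨x, z, y, by linarith, by linarith, hT⟩, ?_, ?_⟩ <;>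
    · rw [hT, circ, circ]
      ext i j
      fin_cases i <;> fin_cases j <;>
        simp [Matrix.mul_apply, Fin.sum_univ_three, Matrix.one_apply] <;> nlinarith
end

section
/- A 3×3 real linear combination M = α₁P₁ + α₂P₂ + ⋯ + α₆P₆ of all six permutation matrices is orthogonal if and only if M is a permutative matrix (every row is a permutation of the first row) that is orthogonal; equivalently, M equals x·P₁ + y·P₂ + z·P₃ or x·P₄ + y·P₅ + z·P₆ for some x, y, z with x² + y² + z² = 1 and x + y + z = ±1. -/
open Matrix

set_option maxHeartbeats 1000000 in
theorem stmt_10 (α₁ α₂ α₃ α₄ α₅ α₆ : ℝ)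
    (M : Matrix (Fin 3) (Fin 3) ℝ)
    (hM : M = α₁ • (1 : Matrix (Fin 3) (Fin 3) ℝ) + α₂ • P2 + α₃ • P3 +
              α₄ • P4 + α₅ • P5 + α₆ • P6) :
    Mᵀ * M = 1 ↔
    ∃ x y z : ℝ, x ^ 2 + y ^ 2 + z ^ 2 = 1 ∧ (x + y + z = 1 ∨ x + y + z = -1) ∧
      (M = x • (1 : Matrix (Fin 3) (Fin 3) ℝ) + y • P2 + z • P3 ∨
       M = x • P4 + y • P5 + z • P6) := by
  have hM' : M = !![α₁+α₄, α₂+α₅, α₃+α₆; α₃+α₅, α₁+α₆, α₂+α₄; α₂+α₆, α₃+α₄, α₁+α₅] := by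
    subst hM; ext i j
    fin_cases i <;> fin_cases j <;>
      simp [P2, P3, P4, P5, P6, Matrix.one_apply, Matrix.vecHead, Matrix.vecTail]
  clear hM
  have hT : Mᵀ = !![α₁+α₄, α₃+α₅, α₂+α₆; α₂+α₅, α₁+α₆, α₃+α₄; α₃+α₆, α₂+α₄, α₁+α₅] := by
    rw [hM']; ext i j; fin_cases i <;> fin_cases j <;> rfl
  constructor
  · intro h
    rw [hT, hM'] at h
    have h00 := congrFun (congrFun h 0) 0
    have h11 := congrFun (congrFun h 1) 1
    have h22 := congrFun (congrFun h 2) 2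
    have h01 := congrFun (congrFun h 0) 1
    simp [Matrix.mul_apply, Fin.sum_univ_three, Matrix.one_apply] at h00 h11 h22 h01
    have key1 : (α₄ - α₅) * (α₁ - α₂) = (α₅ - α₆) * (α₂ - α₃) := by
      linear_combination (1/2 : ℝ) * h00 - (1/2 : ℝ) * h22
    have key2 : (α₄ - α₅) * (α₁ - α₂) + (α₄ - α₅) * (α₂ - α₃) + (α₅ - α₆) * (α₁ - α₂) = 0 := by
      linear_combination (1/2 : ℝ) * h00 - (1/2 : ℝ) * h11
    have hkey : ((α₄ - α₅) * (α₂ - α₃) - (α₅ - α₆) * (α₁ - α₂)) ^ 2 =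
        -3 * ((α₄ - α₅) * (α₁ - α₂)) ^ 2 := by
      linear_combination ((α₄ - α₅) * (α₂ - α₃) + (α₅ - α₆) * (α₁ - α₂) -
        (α₄ - α₅) * (α₁ - α₂)) * key2 + 4 * ((α₄ - α₅) * (α₁ - α₂)) * key1
    have hp11 : (α₄ - α₅) * (α₁ - α₂) = 0 := by
      have h0 : ((α₄ - α₅) * (α₁ - α₂)) ^ 2 ≤ 0 := by
        linarith [hkey, sq_nonneg ((α₄ - α₅) * (α₂ - α₃) - (α₅ - α₆) * (α₁ - α₂))]
      exact sq_eq_zero_iff.mp (le_antisymm h0 (sq_nonneg _))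
    have hp22 : (α₅ - α₆) * (α₂ - α₃) = 0 := by rw [← key1]; exact hp11
    have hps : (α₄ - α₅) * (α₂ - α₃) + (α₅ - α₆) * (α₁ - α₂) = 0 := by
      linarith [key2, hp11]
    have hpp : ((α₄ - α₅) * (α₂ - α₃)) * ((α₅ - α₆) * (α₁ - α₂)) = 0 := by
      have h' : ((α₄ - α₅) * (α₂ - α₃)) * ((α₅ - α₆) * (α₁ - α₂)) =
          ((α₄ - α₅) * (α₁ - α₂)) * ((α₅ - α₆) * (α₂ - α₃)) := by ring
      rw [h', hp11]; ring
    have hp12 : (α₄ - α₅) * (α₂ - α₃) = 0 := by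
      have h0 : ((α₄ - α₅) * (α₂ - α₃)) ^ 2 = 0 := by
        linear_combination ((α₄ - α₅) * (α₂ - α₃)) * hps - hpp
      exact sq_eq_zero_iff.mp h0
    have hp21 : (α₅ - α₆) * (α₁ - α₂) = 0 := by linarith
    by_cases hE : α₁ = α₂ ∧ α₂ = α₃
    · -- α₁ = α₂ = α₃ : anticirculant case
      obtain ⟨h1, h2⟩ := hE
      subst h1; subst h2
      refine ⟨α₁ + α₄, α₁ + α₅, α₁ + α₆, ?_, ?_, Or.inr ?_⟩
      · linear_combination h00
      · have hs2 : (α₁ + α₄ + (α₁ + α₅) + (α₁ + α₆)) ^ 2 = 1 := by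
          linear_combination h00 + 2 * h01
        rcases mul_eq_zero.mp (show (α₁ + α₄ + (α₁ + α₅) + (α₁ + α₆) - 1) *
            (α₁ + α₄ + (α₁ + α₅) + (α₁ + α₆) + 1) = 0 by linear_combination hs2) with h' | h'
        · left; linarith
        · right; linarith
      · rw [hM']; ext i j
        fin_cases i <;> fin_cases j <;>
          simp [P4, P5, P6, Matrix.vecHead, Matrix.vecTail]
    · -- α₄ = α₅ = α₆ : circulant case
      have h5 : α₅ = α₄ := by
        rcases not_and_or.mp hE with h' | h'
        · rcases mul_eq_zero.mp hp11 with h'' | h''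
          · linarith
          · exact absurd (by linarith : α₁ = α₂) h'
        · rcases mul_eq_zero.mp hp12 with h'' | h''
          · linarith
          · exact absurd (by linarith : α₂ = α₃) h'
      have h6 : α₆ = α₄ := by
        rcases not_and_or.mp hE with h' | h'
        · rcases mul_eq_zero.mp hp21 with h'' | h''
          · linarith
          · exact absurd (by linarith : α₁ = α₂) h'
        · rcases mul_eq_zero.mp hp22 with h'' | h''
          · linarith
          · exact absurd (by linarith : α₂ = α₃) h'
      refine ⟨α₁ + α₄, α₂ + α₅, α₃ + α₆, ?_, ?_, Or.inl ?_⟩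
      · linear_combination h00 + (2*α₂ - 2*α₃) * h5 - (2*α₂ - 2*α₃) * h6
      · have hs2 : (α₁ + α₄ + (α₂ + α₅) + (α₃ + α₆)) ^ 2 = 1 := by
          linear_combination h00 + 2 * h01 + (2*α₂ - 2*α₁) * h5 + (2*α₁ - 2*α₃) * h6
        rcases mul_eq_zero.mp (show (α₁ + α₄ + (α₂ + α₅) + (α₃ + α₆) - 1) *
            (α₁ + α₄ + (α₂ + α₅) + (α₃ + α₆) + 1) = 0 by linear_combination hs2) with h' | h'
        · left; linarith
        · right; linarith
      · rw [hM']; ext i j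
        fin_cases i <;> fin_cases j <;>
          simp [P2, P3, Matrix.one_apply, Matrix.vecHead, Matrix.vecTail] <;> linarith
  · rintro ⟨x, y, z, hsq, hsum, hcase⟩
    have hq : x * y + y * z + z * x = 0 := by
      rcases hsum with h' | h' <;> nlinarith [hsq]
    rcases hcase with hc | hc
    · have hL : M = !![x, y, z; z, x, y; y, z, x] := by
        rw [hc]; ext i j
        fin_cases i <;> fin_cases j <;>
          simp [P2, P3, Matrix.one_apply, Matrix.vecHead, Matrix.vecTail]
      have hLT : Mᵀ = !![x, z, y; y, x, z; z, y, x] := by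
        rw [hL]; ext i j; fin_cases i <;> fin_cases j <;> rfl
      rw [hLT, hL]; ext i j
      fin_cases i <;> fin_cases j <;>
        simp [Matrix.mul_apply, Fin.sum_univ_three, Matrix.one_apply] <;>
          first
          | linear_combination hsq
          | linear_combination hq
    · have hL : M = !![x, y, z; y, z, x; z, x, y] := by
        rw [hc]; ext i j
        fin_cases i <;> fin_cases j <;>
          simp [P4, P5, P6, Matrix.vecHead, Matrix.vecTail]
      have hLT : Mᵀ = !![x, y, z; y, z, x; z, x, y] := by
        rw [hL]; ext i j; fin_cases i <;> fin_cases j <;> rfl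
      rw [hLT, hL]; ext i j
      fin_cases i <;> fin_cases j <;>
        simp [Matrix.mul_apply, Fin.sum_univ_three, Matrix.one_apply] <;>
          first
          | linear_combination hsq
          | linear_combination hq
end

section
/- If x, y ∈ ℝ satisfy x² + y² − x − y + xy = 0 and the circulant orthogonal matrix C = x·I + y·P₂ + (1−x−y)·P₃ has all real eigenvalues, then C = I or C = (2/3)J − I (the Grover matrix). Equivalently, the eigenvalues (3x−1)/2 ± √((3x+1)(3x−3))/2 of C are real only if x = 1 or x = −1/3. -/
open Matrix

noncomputable def Jmat : Matrix (Fin 3) (Fin 3) ℝ := !![1,1,1; 1,1,1; 1,1,1]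

theorem stmt_12 (x y : ℝ) (h : x ^ 2 + y ^ 2 - x - y + x * y = 0)
    (C : Matrix (Fin 3) (Fin 3) ℝ)
    (hC : C = x • (1 : Matrix (Fin 3) (Fin 3) ℝ) + y • P2 + (1 - x - y) • P3)
    (hreal : ∀ μ ∈ spectrum ℂ (C.map (algebraMap ℝ ℂ)), μ.im = 0) :
    C = 1 ∨ C = (2/3 : ℝ) • Jmat - 1 := by
  obtain ⟨z, hz⟩ : ∃ z : ℝ, z = 1 - x - y := ⟨_, rfl⟩
  rw [← hz] at hC
  have hmap : C.map (algebraMap ℝ ℂ) = !![(x:ℂ), y, z; z, x, y; y, z, x] := by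
    subst hC
    ext i j
    fin_cases i <;> fin_cases j <;>
      simp [P2, P3, Matrix.one_apply, Matrix.map_apply, Matrix.vecHead, Matrix.vecTail]
  obtain ⟨s, hsdef⟩ : ∃ s : ℝ, s = Real.sqrt 3 := ⟨_, rfl⟩
  have hs : s ^ 2 = 3 := by rw [hsdef]; exact Real.sq_sqrt (by norm_num)
  have hspos : 0 < s := by rw [hsdef]; exact Real.sqrt_pos.mpr (by norm_num)
  obtain ⟨ω, hw⟩ : ∃ ω : ℂ, ω = ⟨-1/2, s/2⟩ := ⟨_, rfl⟩
  obtain ⟨μ, hmu⟩ : ∃ μ : ℂ, μ = (x : ℂ) + y * ω + z * ω ^ 2 := ⟨_, rfl⟩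
  have hmem : μ ∈ spectrum ℂ (C.map (algebraMap ℝ ℂ)) := by
    rw [spectrum.mem_iff]
    intro hu
    rw [Matrix.isUnit_iff_isUnit_det, isUnit_iff_ne_zero] at hu
    apply hu
    have halg : (algebraMap ℂ (Matrix (Fin 3) (Fin 3) ℂ)) μ
        = μ • (1 : Matrix (Fin 3) (Fin 3) ℂ) := by
      simp [Algebra.algebraMap_eq_smul_one]
    rw [halg, hmap]
    have hA : μ • (1 : Matrix (Fin 3) (Fin 3) ℂ) - !![(x:ℂ), y, z; z, x, y; y, z, x]
        = !![μ - x, -y, -z; -z, μ - x, -y; -y, -z, μ - x] := by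
      ext i j
      fin_cases i <;> fin_cases j <;> simp [Matrix.one_apply]
    rw [hA, Matrix.det_fin_three, hmu, hw]
    apply Complex.ext <;>
      simp [Complex.ext_iff, pow_two, Complex.mul_re, Complex.mul_im]
    · linear_combination ((21/64)*z^3 + (3/16)*z^3*s^2 - (1/64)*z^3*s^4 + (9/32)*y*z^2
        - (15/32)*y*z^2*s^2 - (9/16)*y^2*z + (3/16)*y^2*z*s^2 + (3/8)*y^3) * hs
    · linear_combination ((1/32)*z^3*s - (3/32)*z^3*s^3 - (21/32)*y*z^2*s
        + (3/32)*y*z^2*s^3 + (3/4)*y^2*z*s - (1/8)*y^3*s) * hs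
  have him := hreal μ hmem
  have hω2 : (ω ^ 2 : ℂ) = ⟨-1/2, -s/2⟩ := by
    rw [hw]
    apply Complex.ext <;> simp [pow_two, Complex.mul_re, Complex.mul_im] <;> nlinarith [hs]
  have him' : y * (s/2) + z * (-s/2) = 0 := by
    rw [hmu, hω2, hw] at him
    simpa [Complex.add_im, Complex.mul_im] using him
  have hyz : y = z := by
    have h0 : (y - z) * s = 0 := by nlinarith [him']
    rcases mul_eq_zero.mp h0 with h1 | h1
    · linarith
    · exact absurd h1 (ne_of_gt hspos)
  have hy : 2 * y = 1 - x := by rw [hz] at hyz; linarith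
  have hx : (3 * x + 1) * (x - 1) = 0 := by nlinarith [h, hy]
  clear hmem hreal him him' hmap hmu hw hω2 hs hspos hsdef
  rcases mul_eq_zero.mp hx with h1 | h1
  · right
    have hx' : x = -1/3 := by linarith
    have hy' : y = 2/3 := by linarith
    have hz2 : z = 2/3 := by rw [hz, hx', hy']; norm_num
    rw [hC, hx', hy', hz2]
    ext i j
    fin_cases i <;> fin_cases j <;>
      simp [P2, P3, Jmat, Matrix.one_apply, Matrix.vecHead, Matrix.vecTail] <;> norm_num
  · left
    have hx' : x = 1 := by linarith
    have hy' : y = 0 := by linarith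
    have hz2 : z = 0 := by rw [hz, hx', hy']; norm_num
    rw [hC, hx', hy', hz2]
    ext i j
    fin_cases i <;> fin_cases j <;>
      simp [P2, P3, Matrix.one_apply, Matrix.vecHead, Matrix.vecTail]
end

section
/- The rational points (x, y) ∈ ℚ² on the ellipse x² + y² − x − y + xy = 0 with x ∉ {1, −1/3} are exactly those of the form x = 1/3 ± 2(r² − 3)/(3(r² + 3)) for some rational r (with y determined by y = ((1−x) ± √((1−x)(3x+1)))/2 being rational). -/
theorem stmt_16 (x : ℚ) (hx1 : x ≠ 1) (hx2 : x ≠ -1/3) :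
    (∃ y : ℚ, x ^ 2 + y ^ 2 - x - y + x * y = 0) ↔
    (∃ r : ℚ, x = 1/3 + 2 * (r ^ 2 - 3) / (3 * (r ^ 2 + 3)) ∨
              x = 1/3 - 2 * (r ^ 2 - 3) / (3 * (r ^ 2 + 3))) := by
  have h1 : 1 - x ≠ 0 := sub_ne_zero.mpr (Ne.symm hx1)
  constructor
  · rintro ⟨y, hy⟩
    set r : ℚ := (2*y + x - 1)/(1 - x) with hr
    refine ⟨r, Or.inl ?_⟩
    have hs : (2*y + x - 1)^2 = (1-x)*(3*x+1) := by nlinarith [hy]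
    have hr2 : r^2 = (3*x+1)/(1-x) := by
      rw [hr, div_pow, hs]
      field_simp
    have hd : r^2 + 3 ≠ 0 := by positivity
    rw [hr2] at hd ⊢
    field_simp at hd ⊢
    ring
  · rintro ⟨r, h | h⟩ <;> have hd : r^2 + 3 ≠ 0 := by positivity
    · refine ⟨2*(1+r)/(r^2+3), ?_⟩
      subst h
      field_simp
      ring
    · refine ⟨(2*r^2 + 6*r)/(3*(r^2+3)), ?_⟩
      subst h
      field_simp
      ring
end

section
/- If x ∈ ℚ, (1−x)(3x+1) is the square of a rational number, and x ∉ {1, −1/3}, then there exists r ∈ ℚ such that x = 1/3 + 2(r² − 3)/(3(r² + 3)) or x = 1/3 − 2(r² − 3)/(3(r² + 3)). -/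
theorem stmt_17 (x : ℚ) (hsq : ∃ s : ℚ, (1 - x) * (3 * x + 1) = s ^ 2)
    (hx1 : x ≠ 1) (hx2 : x ≠ -1/3) :
    ∃ r : ℚ, x = 1/3 + 2 * (r ^ 2 - 3) / (3 * (r ^ 2 + 3)) ∨
             x = 1/3 - 2 * (r ^ 2 - 3) / (3 * (r ^ 2 + 3)) := by
  obtain ⟨s, hs⟩ := hsq
  have h1 : (1 : ℚ) - x ≠ 0 := sub_ne_zero.mpr (Ne.symm hx1)
  refine ⟨s / (1 - x), Or.inl ?_⟩
  have hpos : (s / (1 - x)) ^ 2 + 3 > 0 := by positivity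
  have h3 : (s / (1 - x)) ^ 2 + 3 ≠ 0 := ne_of_gt hpos
  field_simp at *
  nlinarith [hs, sq_nonneg s, sq_nonneg (1 - x)]
end

section
/- Niven's theorem: if θ is a rational number and cos(πθ) is rational, then cos(πθ) ∈ {0, 1/2, −1/2, 1, −1}. -/
theorem stmt_19 (θ c : ℚ) (h : Real.cos (Real.pi * θ) = (c : ℝ)) :
    c = 0 ∨ c = 1/2 ∨ c = -1/2 ∨ c = 1 ∨ c = -1 := by
  have hc := niven ⟨θ, mul_comm _ _⟩ ⟨c, h⟩
  rw [h] at hc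
  simp only [← Rat.cast_inj (α := ℝ), Rat.cast_zero, Rat.cast_one, Rat.cast_div, Rat.cast_neg,
    Rat.cast_ofNat]
  simp only [Set.mem_insert_iff, Set.mem_singleton_iff] at hc
  tauto
end
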